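/- Fix k ≥ 1 and let f, g : ℓ → ℂ be such that the families α ↦ (α!/|α|!) |f_α|^2 and α ↦ (α!/|α|!) |g_α|^2 are summable. Define (M_k f)_α = f_{α − e_k} if α_k ≥ 1 and 0 otherwise, and (𝓡_k g)_β = ((β_k + 1)/(|β| + 1)) g_{β + e_k}. Then the families α ↦ (α!/|α|!) (M_k f)_α \overline{g_α} and β ↦ (β!/|β|!) f_β \overline{(𝓡_k g)_β} are summable and Σ_{α ∈ ℓ} (α!/|α|!) (M_k f)_α \overline{g_α} = Σ_{β ∈ ℓ} (β!/|β|!) f_β \overline{(𝓡_k g)_β}. -/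

import Mathlib

/-!
With `w α = α! / |α|!` one has `w (β + e_k) = w β · (β_k + 1) / (|β| + 1)`, so the `β`-th term
of `⟨f, 𝓡_k g⟩` is exactly the `(β + e_k)`-th term of `⟨M_k f, g⟩`, while the terms of
`⟨M_k f, g⟩` with `α_k = 0` vanish: the two series are reindexings of each other along
`β ↦ β + e_k`. Absolute summability comes from `w (β + e_k) ≤ w β` and
`2 |f_β| |g_{β+e_k}| ≤ |f_β|² + |g_{β+e_k}|²`.
-/

open Finsupp ComplexConjugate

theorem summable_mul_norm_mul_norm_of_le {ι E F : Type*} [SeminormedAddCommGroup E]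
    [SeminormedAddCommGroup F] {v w : ι → ℝ} {a : ι → E} {b : ι → F}
    (hv : ∀ i, 0 ≤ v i) (hvw : ∀ i, v i ≤ w i)
    (ha : Summable fun i => w i * ‖a i‖ ^ 2) (hb : Summable fun i => v i * ‖b i‖ ^ 2) :
    Summable fun i => v i * ‖a i‖ * ‖b i‖ := by
  refine ((ha.add hb).div_const 2).of_nonneg_of_le
    (fun i => mul_nonneg (mul_nonneg (hv i) (norm_nonneg _)) (norm_nonneg _)) fun i => ?_
  have amgm := mul_le_mul_of_nonneg_left (two_mul_le_add_sq ‖a i‖ ‖b i‖) (hv i)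
  have hwa := mul_le_mul_of_nonneg_right (hvw i) (sq_nonneg ‖a i‖)
  linarith

section Arveson

variable {ι R : Type*}

theorem prod_factorial_add_single [CommSemiring R] (β : ι →₀ ℕ) (k : ι) :
    ((β + single k 1).prod fun _ n => (n.factorial : R)) =
      (β k + 1) * β.prod fun _ n => (n.factorial : R) := by
  classical
  have h0 : ∀ _ : ι, ((0 : ℕ).factorial : R) = 1 := fun _ => by simp
  rw [← mul_prod_erase' _ k _ h0, ← mul_prod_erase' β k _ h0, erase_add, erase_single,
    add_zero, Finsupp.add_apply, single_eq_same, Nat.factorial_succ, Nat.cast_mul, mul_assoc]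
  push_cast
  rfl

theorem degree_add_single (β : ι →₀ ℕ) (k : ι) : (β + single k 1).degree = β.degree + 1 := by
  rw [map_add, degree_single]

noncomputable def arvesonWeight (α : ι →₀ ℕ) : ℝ :=
  (α.prod fun _ n => (n.factorial : ℝ)) / (α.degree.factorial : ℝ)

theorem arvesonWeight_nonneg (α : ι →₀ ℕ) : 0 ≤ arvesonWeight α :=
  div_nonneg (Finset.prod_nonneg fun _ _ => by positivity) (by positivity)

theorem arvesonWeight_add_single (β : ι →₀ ℕ) (k : ι) :
    arvesonWeight (β + single k 1) = arvesonWeight β * ((β k + 1) / (β.degree + 1)) := by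
  rw [arvesonWeight, arvesonWeight, prod_factorial_add_single, degree_add_single,
    Nat.factorial_succ]
  push_cast
  field_simp

theorem arvesonWeight_add_single_le (β : ι →₀ ℕ) (k : ι) :
    arvesonWeight (β + single k 1) ≤ arvesonWeight β := by
  rw [arvesonWeight_add_single]
  refine mul_le_of_le_one_right (arvesonWeight_nonneg β) (div_le_one_of_le₀ ?_ (by positivity))
  exact_mod_cast Nat.add_le_add_right (le_degree k β) 1

theorem ofReal_arvesonWeight (α : ι →₀ ℕ) :
    (arvesonWeight α : ℂ) =
      (α.prod fun _ n => (n.factorial : ℂ)) / (((α.sum fun _ n => n).factorial : ℕ) : ℂ) := by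
  simp only [arvesonWeight, Finsupp.prod, Complex.ofReal_div, Complex.ofReal_prod,
    Complex.ofReal_natCast]
  rfl

end Arveson

section Shift

variable {ι : Type*} (k : ι)

noncomputable def mulVar (f : (ι →₀ ℕ) → ℂ) (α : ι →₀ ℕ) : ℂ :=
  if 1 ≤ α k then f (α - single k 1) else 0

noncomputable def leibenzon (g : (ι →₀ ℕ) → ℂ) (β : ι →₀ ℕ) : ℂ :=
  ((β k : ℂ) + 1) / ((β.degree : ℂ) + 1) * g (β + single k 1)

theorem mulVar_add_single (f : (ι →₀ ℕ) → ℂ) (β : ι →₀ ℕ) :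
    mulVar k f (β + single k 1) = f β := by
  simp [mulVar]

theorem support_mulVar_subset (f : (ι →₀ ℕ) → ℂ) :
    Function.support (mulVar k f) ⊆ Set.range (· + single k 1) := by
  intro α hα
  have hk : 1 ≤ α k := by
    by_contra hk
    exact hα (if_neg hk)
  exact ⟨α - single k 1, tsub_add_cancel_of_le (single_le_iff.2 hk)⟩

theorem arvesonWeight_mul_conj_leibenzon (f g : (ι →₀ ℕ) → ℂ) (β : ι →₀ ℕ) :
    (arvesonWeight β : ℂ) * f β * conj (leibenzon k g β) =
      (arvesonWeight (β + single k 1) : ℂ) * mulVar k f (β + single k 1) *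
        conj (g (β + single k 1)) := by
  rw [mulVar_add_single, arvesonWeight_add_single, leibenzon]
  simp only [map_mul, map_div₀, map_add, map_one, map_natCast]
  push_cast
  ring

theorem mulVar_adjoint_eq_leibenzon (f g : (ι →₀ ℕ) → ℂ)
    (hf : Summable fun α => arvesonWeight α * ‖f α‖ ^ 2)
    (hg : Summable fun α => arvesonWeight α * ‖g α‖ ^ 2) :
    Summable (fun α => (arvesonWeight α : ℂ) * mulVar k f α * conj (g α)) ∧
    Summable (fun β => (arvesonWeight β : ℂ) * f β * conj (leibenzon k g β)) ∧
    ∑' α, (arvesonWeight α : ℂ) * mulVar k f α * conj (g α) =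
      ∑' β, (arvesonWeight β : ℂ) * f β * conj (leibenzon k g β) := by
  have hshift : Function.Injective (· + single k 1 : (ι →₀ ℕ) → ι →₀ ℕ) :=
    add_left_injective _
  have hsupp : Function.support (fun α => (arvesonWeight α : ℂ) * mulVar k f α * conj (g α)) ⊆
      Set.range (· + single k 1) :=
    (Function.support_mul_subset_left _ _).trans <|
      (Function.support_mul_subset_right _ _).trans (support_mulVar_subset k f)
  simp_rw [arvesonWeight_mul_conj_leibenzon]
  have hG : Summable fun β : ι →₀ ℕ => (arvesonWeight (β + single k 1) : ℂ) *
      mulVar k f (β + single k 1) * conj (g (β + single k 1)) := by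
    refine Summable.of_norm ((summable_mul_norm_mul_norm_of_le
      (fun β => arvesonWeight_nonneg _) (arvesonWeight_add_single_le · k) hf
      (hg.comp_injective hshift)).congr fun β => ?_)
    rw [mulVar_add_single, norm_mul, norm_mul, Complex.norm_real, Complex.norm_conj,
      Real.norm_of_nonneg (arvesonWeight_nonneg _)]
  refine ⟨(hshift.summable_iff fun α hα => ?_).1 hG, hG, (hshift.tsum_eq hsupp).symm⟩
  exact Function.notMem_support.1 fun h => hα (hsupp h)

end Shift

/-- In the Arveson space (inner product `⟨f,g⟩ = Σ_α (α!/|α|!) f_α conj(g_α)`), the adjoint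
of multiplication by the variable `z_k` is the Leibenzon operator `𝓡_k`:
`⟨M_k f, g⟩ = ⟨f, 𝓡_k g⟩`. -/
theorem stmt15 (k : ℕ) (f g : (ℕ →₀ ℕ) → ℂ)
    (hf : Summable fun α : ℕ →₀ ℕ =>
      (α.prod fun _ n => (n.factorial : ℝ)) / ((α.sum fun _ n => n).factorial : ℝ) *
        ‖f α‖ ^ 2)
    (hg : Summable fun α : ℕ →₀ ℕ =>
      (α.prod fun _ n => (n.factorial : ℝ)) / ((α.sum fun _ n => n).factorial : ℝ) *
        ‖g α‖ ^ 2) :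
    Summable (fun α : ℕ →₀ ℕ =>
      (α.prod fun _ n => (n.factorial : ℂ)) / (((α.sum fun _ n => n).factorial : ℕ) : ℂ) *
        (if 1 ≤ α k then f (α - Finsupp.single k 1) else 0) * (starRingEnd ℂ) (g α)) ∧
    Summable (fun β : ℕ →₀ ℕ =>
      (β.prod fun _ n => (n.factorial : ℂ)) / (((β.sum fun _ n => n).factorial : ℕ) : ℂ) *
        f β *
        (starRingEnd ℂ) ((((β k : ℂ) + 1) / (((β.sum fun _ n => n : ℕ) : ℂ) + 1)) *
          g (β + Finsupp.single k 1))) ∧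
    (∑' α : ℕ →₀ ℕ,
        (α.prod fun _ n => (n.factorial : ℂ)) / (((α.sum fun _ n => n).factorial : ℕ) : ℂ) *
          (if 1 ≤ α k then f (α - Finsupp.single k 1) else 0) * (starRingEnd ℂ) (g α)) =
      ∑' β : ℕ →₀ ℕ,
        (β.prod fun _ n => (n.factorial : ℂ)) / (((β.sum fun _ n => n).factorial : ℕ) : ℂ) *
          f β *
          (starRingEnd ℂ) ((((β k : ℂ) + 1) / (((β.sum fun _ n => n : ℕ) : ℂ) + 1)) *
            g (β + Finsupp.single k 1)) := by
  have h := mulVar_adjoint_eq_leibenzon k f g hf hg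
  simp only [ofReal_arvesonWeight] at h
  exact h
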